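/- Let G and H be finite simple graphs with G connected, and let S be a minimum distance-equalizer set of G⊙H such that for every i ∈ {1, …, n(G)} either V(H_i) ∩ S = ∅ or V(H_i) ⊆ S. If n(H) > min{ α(Ĝ), β(Ĝ) − β*(G) + 1 }, then |U(S)| = β(Ĝ), i.e. U(S) is a minimum vertex cover of Ĝ. -/

import Mathlib

universe u v

variable {V : Type u} {W : Type v}

/-- A distance-equalizer set of a graph: for every pair of distinct vertices outside `S`
there is a vertex of `S` equidistant to both. -/
def IsDistEqSet {α : Type*} (G : SimpleGraph α) (S : Set α) : Prop :=
  ∀ ⦃x y : α⦄, x ∉ S → y ∉ S → x ≠ y → ∃ w ∈ S, G.dist w x = G.dist w y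

/-- The equidistant dimension of a graph: the minimum cardinality of a distance-equalizer set. -/
noncomputable def eqdim {α : Type*} (G : SimpleGraph α) : ℕ :=
  sInf {n | ∃ S : Set α, IsDistEqSet G S ∧ S.ncard = n}

/-- The bisector of two vertices: vertices equidistant to both. -/
def bisector {α : Type*} (G : SimpleGraph α) (x y : α) : Set α :=
  {w | G.dist w x = G.dist w y}

/-- The empty bisector graph of `G`: two distinct vertices are adjacent iff their bisector
in `G` is empty. -/
def emptyBisector {α : Type*} (G : SimpleGraph α) : SimpleGraph α where
  Adj x y := x ≠ y ∧ bisector G x y = ∅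
  symm := by
    constructor
    rintro x y ⟨h1, h2⟩
    refine ⟨h1.symm, Set.eq_empty_iff_forall_notMem.mpr fun w hw => ?_⟩
    exact Set.eq_empty_iff_forall_notMem.mp h2 w
      ((show G.dist w y = G.dist w x from hw).symm)
  loopless := ⟨fun _ h => h.1 rfl⟩

/-- A vertex cover of a graph: a set of vertices meeting every edge. -/
def IsVertexCover {α : Type*} (G : SimpleGraph α) (C : Set α) : Prop :=
  ∀ ⦃x y : α⦄, G.Adj x y → x ∈ C ∨ y ∈ C

/-- An independent set of a graph: a set of pairwise non-adjacent vertices. -/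
def IsIndepSet {α : Type*} (G : SimpleGraph α) (A : Set α) : Prop :=
  ∀ ⦃x y : α⦄, x ∈ A → y ∈ A → ¬ G.Adj x y

/-- The vertex cover number `β(G)`. -/
noncomputable def vcNum {α : Type*} (G : SimpleGraph α) : ℕ :=
  sInf {n | ∃ C : Set α, IsVertexCover G C ∧ C.ncard = n}

/-- The independence number `α(G)`. -/
noncomputable def indepNum {α : Type*} (G : SimpleGraph α) : ℕ :=
  sSup {n | ∃ A : Set α, IsIndepSet G A ∧ A.ncard = n}

/-- A forward-equalized pair `(X, Y)` of `G`: `X ∪ Y = V(G)` and for every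
`a ∈ X \ Y` and `b ∈ Y \ X` there is `w` with `d(w,a) = d(w,b) + 1`. -/
def IsForwardEqualizedPair {α : Type*} (G : SimpleGraph α) (X Y : Set α) : Prop :=
  X ∪ Y = Set.univ ∧
  ∀ ⦃a⦄, a ∈ X \ Y → ∀ ⦃b⦄, b ∈ Y \ X → ∃ w, G.dist w a = G.dist w b + 1

/-- `β*(G)`: the minimum of `|X ∩ Y|` over all pairs of vertex covers `X, Y` of the
empty bisector graph of `G` such that `(X, Y)` is a forward-equalized pair of `G`. -/
noncomputable def betaStar {α : Type*} (G : SimpleGraph α) : ℕ :=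
  sInf {n | ∃ X Y : Set α,
    IsVertexCover (emptyBisector G) X ∧ IsVertexCover (emptyBisector G) Y ∧
    IsForwardEqualizedPair G X Y ∧ (X ∩ Y).ncard = n}

/-- The corona product `G ⊙ H`: one copy of `H` for each vertex `i` of `G` (the vertices
`Sum.inr (i, w)`), with `i` joined to every vertex of its copy. -/
def corona (G : SimpleGraph V) (H : SimpleGraph W) : SimpleGraph (V ⊕ V × W) where
  Adj x y :=
    match x, y with
    | Sum.inl a, Sum.inl b => G.Adj a b
    | Sum.inl a, Sum.inr p => a = p.1
    | Sum.inr p, Sum.inl a => a = p.1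
    | Sum.inr p, Sum.inr q => p.1 = q.1 ∧ H.Adj p.2 q.2
  symm := by
    constructor
    rintro (a | p) (b | q) h
    · exact h.symm
    · exact h
    · exact h
    · exact ⟨h.1.symm, h.2.symm⟩
  loopless := by
    constructor
    rintro (a | p) h
    · exact G.loopless.irrefl a h
    · exact H.loopless.irrefl p.2 h.2

/-!
Distances in `G ⊙ H` are read off `G`: a vertex `a` of `G` is at distance `d_G(a, i)` from `i`
and `d_G(a, i) + 1` from the copy `H_i`, and vertices of distinct copies `H_i`, `H_j` are at
distance `d_G(i, j) + 2`. Hence, if `S` is a distance-equalizer set, a vertex of `S` equalizing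
two vertices outside `S` lies over a vertex of `G` that is equidistant from the vertices of `G`
under them, or one step farther from the one lying in `G`. This makes `L(S)` and `U(S)` vertex
covers of `Ĝ` with `L(S) ∪ U(S) = V(G)`, and `(U(S), L(S))` a forward-equalized pair.

When every copy lies inside or outside `S`, `|S| = |L(S)| + |U(S)| n(H)`, while `V(G)` together
with the copies over a minimum vertex cover of `Ĝ` is a distance-equalizer set of size
`n(G) + β(Ĝ) n(H)`. If `|U(S)| > β(Ĝ)`, comparing the two sizes gives `n(H) ≤ α(Ĝ)` using
`|L(S)| ≥ β(Ĝ)` and `n(G) ≤ α(Ĝ) + β(Ĝ)`, and `n(H) ≤ β(Ĝ) - β*(G) + 1` using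
`|L(S)| + |U(S)| = n(G) + |L(S) ∩ U(S)|` and `|L(S) ∩ U(S)| ≥ β*(G)`.
-/

open Set

namespace SimpleGraph

variable {α : Type*} {K : SimpleGraph α}

theorem Walk.le_add_length_of_adj {f : α → ℕ} (hf : ∀ ⦃x y⦄, K.Adj x y → f y ≤ f x + 1)
    {s t : α} (p : K.Walk s t) : f t ≤ f s + p.length := by
  induction p with
  | nil => simp
  | cons h _ ih =>
    have := hf h
    rw [Walk.length_cons]
    omega

theorem Reachable.le_add_dist_of_adj {f : α → ℕ} (hf : ∀ ⦃x y⦄, K.Adj x y → f y ≤ f x + 1)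
    {s t : α} (h : K.Reachable s t) : f t ≤ f s + K.dist s t := by
  obtain ⟨p, hp⟩ := h.exists_walk_length_eq_dist
  exact hp ▸ p.le_add_length_of_adj hf

theorem Adj.dist_le_dist_add_one {u v w : α} (h : K.Adj v w) : K.dist u w ≤ K.dist u v + 1 := by
  rcases h.diff_dist_adj (u := u) with h | h | h <;> omega

end SimpleGraph

section Covers

variable {α : Type*} (K : SimpleGraph α)

theorem emptyBisector_adj_iff {u v : α} :
    (emptyBisector K).Adj u v ↔ u ≠ v ∧ ∀ a, K.dist a u ≠ K.dist a v := by
  simp [emptyBisector, bisector, eq_empty_iff_forall_notMem]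

theorem vcNum_le {C : Set α} (hC : IsVertexCover K C) : vcNum K ≤ C.ncard :=
  Nat.sInf_le ⟨C, hC, rfl⟩

theorem exists_isVertexCover_ncard_eq_vcNum : ∃ C, IsVertexCover K C ∧ C.ncard = vcNum K :=
  Nat.sInf_mem (s := {n | ∃ C, IsVertexCover K C ∧ C.ncard = n})
    ⟨_, univ, fun _ _ _ => Or.inl trivial, rfl⟩

theorem IsVertexCover.isIndepSet_compl {C : Set α} (hC : IsVertexCover K C) :
    IsIndepSet K Cᶜ :=
  fun _ _ hx hy h => (hC h).elim hx hy

theorem IsIndepSet.ncard_le_indepNum [Finite α] {A : Set α} (hA : IsIndepSet K A) :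
    A.ncard ≤ indepNum K :=
  le_csSup ⟨Nat.card α, by rintro _ ⟨B, -, rfl⟩; exact ncard_le_card B⟩ ⟨A, hA, rfl⟩

theorem card_le_indepNum_add_vcNum [Finite α] : Nat.card α ≤ indepNum K + vcNum K := by
  obtain ⟨C, hC, hCc⟩ := exists_isVertexCover_ncard_eq_vcNum K
  have := (hC.isIndepSet_compl K).ncard_le_indepNum K
  have := ncard_add_ncard_compl C
  omega

end Covers

namespace corona

open Sum
open SimpleGraph hiding IsVertexCover IsIndepSet

variable {G : SimpleGraph V} {H : SimpleGraph W}

-- A vertex `x` of `G ⊙ H` is either `base x` itself (level 0) or lies in the copy of `H`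
-- attached to `base x` (level 1).
def base : V ⊕ V × W → V := Sum.elim id Prod.fst

def level : V ⊕ V × W → ℕ := Sum.elim (fun _ => 0) (fun _ => 1)

theorem adj_inl_inr (i : V) (w : W) : (corona G H).Adj (inl i) (inr (i, w)) := rfl

theorem dist_base_add_level_le (a : V) ⦃x y : V ⊕ V × W⦄ (h : (corona G H).Adj x y) :
    G.dist a (base y) + level y ≤ G.dist a (base x) + level x + 1 := by
  rcases x with c | ⟨i, w⟩ <;> rcases y with d | ⟨j, w'⟩
  · exact Adj.dist_le_dist_add_one h
  · obtain rfl : c = j := h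
    simp [base, level]
  · obtain rfl : d = i := h
    simp only [base, level, elim_inl, elim_inr, id]
    omega
  · obtain rfl : i = j := h.1
    simp [base, level]

theorem exists_walk_inl_inl (hG : G.Connected) (a b : V) :
    ∃ q : (corona G H).Walk (inl a) (inl b), q.length = G.dist a b := by
  obtain ⟨p, hp⟩ := (hG a b).exists_walk_length_eq_dist
  exact ⟨p.map (⟨inl, id⟩ : G →g corona G H), (Walk.length_map _ _).trans hp⟩

theorem dist_inl (hG : G.Connected) (a : V) (x : V ⊕ V × W) :
    (corona G H).dist (inl a) x = G.dist a (base x) + level x := by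
  obtain ⟨q, hq⟩ : ∃ q : (corona G H).Walk (inl a) x,
      q.length = G.dist a (base x) + level x := by
    rcases x with b | ⟨i, w⟩
    · exact exists_walk_inl_inl hG a b
    · obtain ⟨p, hp⟩ := exists_walk_inl_inl (H := H) hG a i
      exact ⟨p.concat (adj_inl_inr i w), by simp [hp, base, level]⟩
  refine le_antisymm (hq ▸ dist_le q) ?_
  simpa [base, level] using Reachable.le_add_dist_of_adj (dist_base_add_level_le a) ⟨q⟩

theorem dist_inr_inr (hG : G.Connected) {k v : V} (hkv : k ≠ v) (w w' : W) :
    (corona G H).dist (inr (k, w)) (inr (v, w')) = G.dist k v + 2 := by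
  classical
  obtain ⟨p, hp⟩ := exists_walk_inl_inl (H := H) hG k v
  let q := Walk.cons (adj_inl_inr k w).symm (p.concat (adj_inl_inr v w'))
  refine le_antisymm (le_of_le_of_eq (dist_le q) (by simp [q, hp])) ?_
  -- `f x` is the distance from the copy of `H` at `k` to `x`
  let f : V ⊕ V × W → ℕ := fun x =>
    if ∃ w, x = inr (k, w) then 0 else G.dist k (base x) + level x + 1
  have hf : ∀ ⦃x y⦄, (corona G H).Adj x y → f y ≤ f x + 1 := by
    intro x y hxy
    by_cases hy : ∃ w, y = inr (k, w)
    · simp [f, hy]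
    by_cases hx : ∃ w, x = inr (k, w)
    · obtain ⟨w, rfl⟩ := hx
      rcases y with d | ⟨j, w'⟩
      · obtain rfl : d = k := hxy
        simp [f, base, level]
      · exact absurd ⟨w', by rw [show j = k from hxy.1.symm]⟩ hy
    · simp only [f, hx, hy, if_false]
      have := dist_base_add_level_le k hxy
      omega
  have := Reachable.le_add_dist_of_adj hf ⟨q⟩
  simp [f, base, level, hkv.symm] at this
  omega

theorem dist_inl_right (hG : G.Connected) (s : V ⊕ V × W) (v : V) :
    (corona G H).dist s (inl v) = G.dist (base s) v + level s := by
  rw [dist_comm, dist_inl hG, dist_comm]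

theorem dist_inr_right (hG : G.Connected) {s : V ⊕ V × W} {v : V}
    (hs : ∀ w, s ≠ inr (v, w)) (w : W) :
    (corona G H).dist s (inr (v, w)) = G.dist (base s) v + level s + 1 := by
  rcases s with a | ⟨k, w'⟩
  · exact dist_inl hG a _
  · have hkv : k ≠ v := fun h => hs w' (by rw [h])
    exact dist_inr_inr hG hkv w' w

-- The paper's `L(S)` and `U(S)`.
def lowerPart (S : Set (V ⊕ V × W)) : Set V := {v | inl v ∈ S}

def upperPart (S : Set (V ⊕ V × W)) : Set V := {v | ∃ w : W, inr (v, w) ∈ S}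

theorem ne_inr_of_notMem_upperPart {S : Set (V ⊕ V × W)} {s : V ⊕ V × W} (hs : s ∈ S) {v : V}
    (hv : v ∉ upperPart S) (w : W) : s ≠ inr (v, w) := by
  rintro rfl
  exact hv ⟨w, hs⟩

section DistEqSet

variable {S : Set (V ⊕ V × W)}

theorem exists_dist_eq_of_notMem_lowerPart (hG : G.Connected) (hS : IsDistEqSet (corona G H) S)
    {u v : V} (hu : u ∉ lowerPart S) (hv : v ∉ lowerPart S) (huv : u ≠ v) :
    ∃ a, G.dist a u = G.dist a v := by
  obtain ⟨s, -, h⟩ := hS hu hv (by simpa using huv)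
  rw [dist_inl_right hG, dist_inl_right hG] at h
  exact ⟨base s, by omega⟩

theorem exists_dist_eq_of_notMem_upperPart [Nonempty W] (hG : G.Connected)
    (hS : IsDistEqSet (corona G H) S) {u v : V} (hu : u ∉ upperPart S) (hv : v ∉ upperPart S)
    (huv : u ≠ v) : ∃ a, G.dist a u = G.dist a v := by
  let w : W := Classical.arbitrary W
  obtain ⟨s, hs, h⟩ := hS (x := inr (u, w)) (y := inr (v, w)) (fun h => hu ⟨w, h⟩)
    (fun h => hv ⟨w, h⟩) (by simpa using huv)
  rw [dist_inr_right hG (ne_inr_of_notMem_upperPart hs hu),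
    dist_inr_right hG (ne_inr_of_notMem_upperPart hs hv)] at h
  exact ⟨base s, by omega⟩

theorem exists_dist_eq_add_one [Nonempty W] (hG : G.Connected)
    (hS : IsDistEqSet (corona G H) S) {u v : V} (hu : u ∉ lowerPart S) (hv : v ∉ upperPart S) :
    ∃ a, G.dist a u = G.dist a v + 1 := by
  let w : W := Classical.arbitrary W
  obtain ⟨s, hs, h⟩ := hS (x := inl u) (y := inr (v, w)) hu (fun h => hv ⟨w, h⟩) (by simp)
  rw [dist_inl_right hG, dist_inr_right hG (ne_inr_of_notMem_upperPart hs hv)] at h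
  exact ⟨base s, by omega⟩

theorem isVertexCover_lowerPart (hG : G.Connected) (hS : IsDistEqSet (corona G H) S) :
    IsVertexCover (emptyBisector G) (lowerPart S) := by
  intro u v huv
  rw [emptyBisector_adj_iff] at huv
  by_contra! h
  obtain ⟨a, ha⟩ := exists_dist_eq_of_notMem_lowerPart hG hS h.1 h.2 huv.1
  exact huv.2 a ha

theorem isVertexCover_upperPart [Nonempty W] (hG : G.Connected)
    (hS : IsDistEqSet (corona G H) S) : IsVertexCover (emptyBisector G) (upperPart S) := by
  intro u v huv
  rw [emptyBisector_adj_iff] at huv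
  by_contra! h
  obtain ⟨a, ha⟩ := exists_dist_eq_of_notMem_upperPart hG hS h.1 h.2 huv.1
  exact huv.2 a ha

theorem lowerPart_union_upperPart [Nonempty W] (hG : G.Connected)
    (hS : IsDistEqSet (corona G H) S) : lowerPart S ∪ upperPart S = univ := by
  refine eq_univ_of_forall fun v => ?_
  by_contra! h
  rw [mem_union, not_or] at h
  obtain ⟨a, ha⟩ := exists_dist_eq_add_one hG hS h.1 h.2
  omega

theorem isForwardEqualizedPair [Nonempty W] (hG : G.Connected)
    (hS : IsDistEqSet (corona G H) S) :
    IsForwardEqualizedPair G (upperPart S) (lowerPart S) :=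
  ⟨union_comm (upperPart S) _ ▸ lowerPart_union_upperPart hG hS,
    fun _ ha _ hb => exists_dist_eq_add_one hG hS ha.2 hb.2⟩

end DistEqSet

theorem ncard_inl_image_union_inr_image [Finite V] [Finite W] (A C : Set V) :
    (inl '' A ∪ inr '' (C ×ˢ univ) : Set (V ⊕ V × W)).ncard = A.ncard + C.ncard * Nat.card W := by
  rw [ncard_union_eq (disjoint_left.2 (by rintro _ ⟨a, -, rfl⟩ ⟨p, -, h⟩; simp at h)),
    ncard_image_of_injective _ inl_injective, ncard_image_of_injective _ inr_injective,
    ncard_prod, ncard_univ]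

theorem ncard_eq_lowerPart_add_upperPart_mul [Finite V] [Finite W] {S : Set (V ⊕ V × W)}
    (hS : ∀ i w w', inr (i, w) ∈ S → inr (i, w') ∈ S) :
    S.ncard = (lowerPart S).ncard + (upperPart S).ncard * Nat.card W := by
  rw [← ncard_inl_image_union_inr_image]
  congr 1
  ext (v | ⟨i, w⟩)
  · simp [lowerPart]
  · simpa [upperPart] using ⟨fun h => ⟨w, h⟩, fun ⟨w', h⟩ => hS i w' w h⟩

theorem isDistEqSet_of_isVertexCover (hG : G.Connected) {C : Set V}
    (hC : IsVertexCover (emptyBisector G) C) :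
    IsDistEqSet (corona G H) (inl '' univ ∪ inr '' (C ×ˢ univ)) := by
  have hinl (a : V) : inl a ∈ (inl '' univ ∪ inr '' (C ×ˢ univ) : Set (V ⊕ V × W)) :=
    Or.inl (mem_image_of_mem inl (mem_univ a))
  rintro (a | ⟨i, w⟩) (b | ⟨j, w'⟩) hx hy -
  any_goals first | exact absurd (hinl _) hx | exact absurd (hinl _) hy
  have hi : i ∉ C := fun h => hx (Or.inr ⟨(i, w), ⟨h, trivial⟩, rfl⟩)
  have hj : j ∉ C := fun h => hy (Or.inr ⟨(j, w'), ⟨h, trivial⟩, rfl⟩)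
  obtain ⟨a, ha⟩ : ∃ a, G.dist a i = G.dist a j := by
    by_contra! h
    by_cases hij : i = j
    · exact h i (congrArg _ hij)
    · exact (hC ((emptyBisector_adj_iff G).2 ⟨hij, h⟩)).elim hi hj
  exact ⟨inl a, Or.inl ⟨a, trivial, rfl⟩, by simp [dist_inl hG, base, level, ha]⟩

theorem eqdim_le [Finite V] [Finite W] (hG : G.Connected) :
    eqdim (corona G H) ≤ Nat.card V + vcNum (emptyBisector G) * Nat.card W := by
  obtain ⟨C, hC, hCc⟩ := exists_isVertexCover_ncard_eq_vcNum (emptyBisector G)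
  calc eqdim (corona G H)
      ≤ (inl '' univ ∪ inr '' (C ×ˢ univ) : Set (V ⊕ V × W)).ncard :=
        Nat.sInf_le ⟨_, isDistEqSet_of_isVertexCover hG hC, rfl⟩
    _ = _ := by rw [ncard_inl_image_union_inr_image, ncard_univ, hCc]

end corona

open corona in
/-- If `S` is a minimum distance-equalizer set of `G ⊙ H` such that each
copy of `H` is disjoint from or contained in `S`, and
`n(H) > min{α(Ĝ), β(Ĝ) − β*(G) + 1}`, then `U(S)` is a minimum vertex cover of `Ĝ`. -/
theorem corona_Uset_is_min_vertexCover [Fintype V] [Fintype W]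
    (G : SimpleGraph V) (H : SimpleGraph W) (hG : G.Connected)
    (S : Set (V ⊕ V × W)) (hS : IsDistEqSet (corona G H) S)
    (hmin : S.ncard = eqdim (corona G H))
    (hstruct : ∀ i : V, {x : V ⊕ V × W | ∃ w : W, x = Sum.inr (i, w)} ∩ S = ∅ ∨
      {x : V ⊕ V × W | ∃ w : W, x = Sum.inr (i, w)} ⊆ S)
    (hW : min (indepNum (emptyBisector G)) (vcNum (emptyBisector G) - betaStar G + 1) <
      Fintype.card W) :
    IsVertexCover (emptyBisector G) {v : V | ∃ w : W, Sum.inr (v, w) ∈ S} ∧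
    {v : V | ∃ w : W, Sum.inr (v, w) ∈ S}.ncard = vcNum (emptyBisector G) := by
  have : Nonempty W := Fintype.card_pos_iff.mp (by omega)
  have hU := isVertexCover_upperPart hG hS
  have hL := isVertexCover_lowerPart hG hS
  refine ⟨hU, le_antisymm ?_ (vcNum_le _ hU)⟩
  change (upperPart S).ncard ≤ _
  by_contra! hlt
  have hcopies : ∀ i w w', Sum.inr (i, w) ∈ S → Sum.inr (i, w') ∈ S := fun i w w' h =>
    (hstruct i).elim (fun h0 => absurd h0 (nonempty_iff_ne_empty.1 ⟨_, ⟨w, rfl⟩, h⟩))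
      fun hsub => hsub ⟨w', rfl⟩
  have hcard := ncard_eq_lowerPart_add_upperPart_mul hcopies
  have hupper : S.ncard ≤ _ := hmin ▸ eqdim_le (H := H) hG
  have hstar : betaStar G ≤ (upperPart S ∩ lowerPart S).ncard :=
    Nat.sInf_le ⟨_, _, hU, hL, isForwardEqualizedPair hG hS, rfl⟩
  have hinter := ncard_union_add_ncard_inter (lowerPart S) (upperPart S)
  rw [lowerPart_union_upperPart hG hS, ncard_univ, inter_comm] at hinter
  have hgallai := card_le_indepNum_add_vcNum (emptyBisector G)
  have hlower := vcNum_le _ hL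
  simp only [Nat.card_eq_fintype_card] at *
  obtain ⟨t, ht⟩ : ∃ t, Fintype.card W = t + 1 := Nat.exists_eq_add_one.2 (by omega)
  have hmul := Nat.mul_le_mul_right t hlt
  rw [Nat.succ_mul] at hmul
  simp only [ht, Nat.mul_succ] at hcard hupper hW
  omega
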